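/- Let n≥1 and let T_n(t)=Σ_{k=−n}^{n} c_k e^{ikt} be a trigonometric polynomial of degree at most n with complex coefficients c_k. Then for all 0<p<q≤∞, with m_p the unique positive integer in [p/2, 1+p/2): ‖T_n‖_{L^q[0,2π]} ≤ ( (2m_p·n+1)/(2π) )^{1/p−1/q} · ‖T_n‖_{L^p[0,2π]}. -/

import Mathlib

/-!
For a trigonometric polynomial `S` of degree `N`, Cauchy–Schwarz on the coefficients together
with Parseval gives `‖S‖_∞² ≤ (2N+1)/(2π) ‖S‖₂²`. Applied to `S = T^m`, of degree `mn`, with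
`2m ≥ p`, and combined with `|T|^{2m} ≤ ‖T‖_∞^{2m-p} |T|^p`, this yields
`‖T‖_∞^p ≤ (2mn+1)/(2π) ‖T‖_p^p`. The `L^q` bound follows from
`‖T‖_q^q ≤ ‖T‖_∞^{q-p} ‖T‖_p^p`.
-/

open Complex MeasureTheory Polynomial Real Set

noncomputable section

def trigLp (f : ℝ → ℂ) (p : ℝ) : ℝ :=
  (∫ t in (0:ℝ)..(2 * Real.pi), ‖f t‖ ^ p) ^ (1/p)

def trigSup (f : ℝ → ℂ) : ℝ :=
  sSup ((fun t => ‖f t‖) '' Set.Icc (0:ℝ) (2 * Real.pi))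

section SupNorm

variable {f : ℝ → ℂ}

lemma exists_norm_eq_trigSup (hf : Continuous f) :
    ∃ t ∈ Icc (0:ℝ) (2 * π), ‖f t‖ = trigSup f :=
  (isCompact_Icc.image hf.norm).sSup_mem ((nonempty_Icc.2 (by positivity)).image _)

lemma norm_le_trigSup (hf : Continuous f) {t : ℝ} (ht : t ∈ Icc (0:ℝ) (2 * π)) :
    ‖f t‖ ≤ trigSup f :=
  le_csSup (isCompact_Icc.image hf.norm).bddAbove (mem_image_of_mem _ ht)

lemma trigSup_nonneg (hf : Continuous f) : 0 ≤ trigSup f :=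
  (norm_nonneg _).trans (norm_le_trigSup hf (t := 0) ⟨le_rfl, by positivity⟩)

lemma integral_rpow_le_trigSup_rpow_mul (hf : Continuous f) {p q : ℝ} (hp : 0 ≤ p)
    (hpq : p ≤ q) :
    ∫ t in (0:ℝ)..2 * π, ‖f t‖ ^ q ≤ trigSup f ^ (q - p) * ∫ t in (0:ℝ)..2 * π, ‖f t‖ ^ p := by
  rw [← intervalIntegral.integral_const_mul]
  refine intervalIntegral.integral_mono_on (by positivity) ?_ ?_ fun t ht => ?_
  · exact (hf.norm.rpow_const fun _ => Or.inr (hp.trans hpq)).intervalIntegrable _ _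
  · exact (continuous_const.mul (hf.norm.rpow_const fun _ => Or.inr hp)).intervalIntegrable _ _
  · calc ‖f t‖ ^ q = ‖f t‖ ^ (q - p) * ‖f t‖ ^ p := by
          rw [← Real.rpow_add_of_nonneg (norm_nonneg _) (sub_nonneg.2 hpq) hp, sub_add_cancel]
      _ ≤ trigSup f ^ (q - p) * ‖f t‖ ^ p := by
          gcongr
          exact norm_le_trigSup hf ht

lemma integral_norm_rpow_nonneg (f : ℝ → ℂ) (p : ℝ) : 0 ≤ ∫ t in (0:ℝ)..2 * π, ‖f t‖ ^ p :=
  intervalIntegral.integral_nonneg (by positivity) fun t _ => by positivity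

lemma trigLp_nonneg (f : ℝ → ℂ) (p : ℝ) : 0 ≤ trigLp f p :=
  Real.rpow_nonneg (integral_norm_rpow_nonneg f p) _

lemma trigLp_rpow {p : ℝ} (hp : p ≠ 0) (f : ℝ → ℂ) :
    trigLp f p ^ p = ∫ t in (0:ℝ)..2 * π, ‖f t‖ ^ p := by
  rw [trigLp, ← Real.rpow_mul (integral_norm_rpow_nonneg f p), one_div_mul_cancel hp,
    Real.rpow_one]

lemma trigSup_le_of_rpow_le (hf : Continuous f) {p C : ℝ} (hp : 0 < p) (hC : 0 ≤ C)
    (h : trigSup f ^ p ≤ C * ∫ t in (0:ℝ)..2 * π, ‖f t‖ ^ p) :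
    trigSup f ≤ C ^ (1 / p) * trigLp f p := by
  rw [trigLp, ← Real.mul_rpow hC (integral_norm_rpow_nonneg f p), one_div]
  exact (Real.le_rpow_inv_iff_of_pos (trigSup_nonneg hf)
    (mul_nonneg hC (integral_norm_rpow_nonneg f p)) hp).2 h

lemma trigLp_le_of_trigSup_rpow_le (hf : Continuous f) {p q C : ℝ} (hp : 0 < p) (hpq : p < q)
    (hC : 0 ≤ C) (h : trigSup f ^ p ≤ C * ∫ t in (0:ℝ)..2 * π, ‖f t‖ ^ p) :
    trigLp f q ≤ C ^ (1 / p - 1 / q) * trigLp f p := by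
  set A := C ^ (1 / p)
  set B := trigLp f p
  have hq : 0 < q := hp.trans hpq
  have hB : 0 ≤ B := trigLp_nonneg f p
  calc trigLp f q ≤ (trigSup f ^ (q - p) * B ^ p) ^ (1 / q) := by
        rw [trigLp, trigLp_rpow hp.ne']
        exact Real.rpow_le_rpow (integral_norm_rpow_nonneg f q)
          (integral_rpow_le_trigSup_rpow_mul hf hp.le hpq.le) (by positivity)
    _ ≤ ((A * B) ^ (q - p) * B ^ p) ^ (1 / q) := by
        have hM := trigSup_le_of_rpow_le hf hp hC h
        have hM₀ := trigSup_nonneg hf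
        gcongr
    _ = C ^ (1 / p - 1 / q) * B := by
        rw [Real.mul_rpow (by positivity) hB, mul_assoc,
          ← Real.rpow_add_of_nonneg hB (by linarith) hp.le, sub_add_cancel,
          Real.mul_rpow (by positivity) (by positivity), ← Real.rpow_mul (by positivity),
          ← Real.rpow_mul hB, mul_one_div_cancel hq.ne', Real.rpow_one, ← Real.rpow_mul hC]
        congr 2
        field_simp

end SupNorm

section TrigPoly

open ComplexConjugate

def IsTrigPoly (N : ℕ) (f : ℝ → ℂ) : Prop :=
  ∃ c : ℤ → ℂ, ∀ t, f t = ∑ k ∈ Finset.Icc (-(N:ℤ)) N, c k * exp (k * t * I)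

lemma exp_int_mul_mul_I_mul (k l : ℤ) (t : ℝ) :
    exp (k * t * I) * exp (l * t * I) = exp ((k + l : ℤ) * t * I) := by
  rw [← Complex.exp_add]
  push_cast
  ring_nf

lemma norm_exp_int_mul_mul_I (k : ℤ) (t : ℝ) : ‖exp (k * t * I)‖ = 1 := by
  simpa using norm_exp_ofReal_mul_I (k * t)

lemma IsTrigPoly.continuous {N : ℕ} {f : ℝ → ℂ} (hf : IsTrigPoly N f) : Continuous f := by
  obtain ⟨c, hc⟩ := hf
  rw [funext hc]
  fun_prop

lemma IsTrigPoly.mul {N M : ℕ} {f g : ℝ → ℂ} (hf : IsTrigPoly N f) (hg : IsTrigPoly M g) :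
    IsTrigPoly (N + M) (f * g) := by
  obtain ⟨a, ha⟩ := hf
  obtain ⟨b, hb⟩ := hg
  refine ⟨fun j => ∑ k ∈ Finset.Icc (-(N:ℤ)) N, ∑ l ∈ Finset.Icc (-(M:ℤ)) M,
    if k + l = j then a k * b l else 0, fun t => ?_⟩
  calc (f * g) t
      = ∑ k ∈ Finset.Icc (-(N:ℤ)) N, ∑ l ∈ Finset.Icc (-(M:ℤ)) M,
          a k * b l * exp ((k + l : ℤ) * t * I) := by
        rw [Pi.mul_apply, ha, hb, Finset.sum_mul_sum]
        refine Finset.sum_congr rfl fun k _ => Finset.sum_congr rfl fun l _ => ?_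
        rw [← exp_int_mul_mul_I_mul]
        ring
    _ = _ := by
        simp only [Finset.sum_mul, ite_mul, zero_mul]
        conv_rhs => rw [Finset.sum_comm]
        refine Finset.sum_congr rfl fun k hk => ?_
        conv_rhs => rw [Finset.sum_comm]
        refine Finset.sum_congr rfl fun l hl => ?_
        rw [Finset.sum_ite_eq, if_pos]
        simp only [Finset.mem_Icc] at hk hl ⊢
        push_cast
        omega

lemma IsTrigPoly.pow {N : ℕ} {f : ℝ → ℂ} (hf : IsTrigPoly N f) (m : ℕ) :
    IsTrigPoly (m * N) (f ^ m) := by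
  induction m with
  | zero => exact ⟨fun _ => 1, fun t => by simp⟩
  | succ m ih => simpa only [pow_succ, add_one_mul] using ih.mul hf

lemma integral_exp_int_mul_mul_I (m : ℤ) :
    ∫ t in (0:ℝ)..2 * π, exp (m * t * I) = if m = 0 then (2 * π : ℂ) else 0 := by
  split_ifs with hm
  · simp [hm]
  · have hmI : (m : ℂ) * I ≠ 0 := by simp [hm]
    simp only [mul_right_comm _ _ I, integral_exp_mul_complex hmI]
    push_cast
    rw [show (m : ℂ) * I * (2 * π) = m * (2 * π * I) by ring, exp_int_mul_two_pi_mul_I]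
    simp

lemma integral_exp_mul_conj_exp (k l : ℤ) :
    ∫ t in (0:ℝ)..2 * π, exp (k * t * I) * conj (exp (l * t * I)) =
      if k = l then (2 * π : ℂ) else 0 := by
  have h : ∀ t : ℝ, conj (exp (l * t * I)) = exp ((-l : ℤ) * t * I) := fun t => by
    rw [← exp_conj]
    simp
  simp only [h, exp_int_mul_mul_I_mul, integral_exp_int_mul_mul_I, ← sub_eq_add_neg, sub_eq_zero]

lemma integral_norm_sq_trigSum (N : ℕ) (c : ℤ → ℂ) :
    ∫ t in (0:ℝ)..2 * π, ‖∑ k ∈ Finset.Icc (-(N:ℤ)) N, c k * exp (k * t * I)‖ ^ 2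
      = 2 * π * ∑ k ∈ Finset.Icc (-(N:ℤ)) N, ‖c k‖ ^ 2 := by
  apply ofReal_injective
  rw [← intervalIntegral.integral_ofReal]
  have hsummand : ∀ k l : ℤ, ∀ t : ℝ, c k * exp (k * t * I) * conj (c l * exp (l * t * I)) =
      c k * conj (c l) * (exp (k * t * I) * conj (exp (l * t * I))) := fun k l t => by
    rw [map_mul]; ring
  have hintegrable : ∀ k l : ℤ, IntervalIntegrable
      (fun t : ℝ => c k * conj (c l) * (exp (k * t * I) * conj (exp (l * t * I)))) volume 0 (2 * π) :=
    fun k l => by apply Continuous.intervalIntegrable; fun_prop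
  simp only [ofReal_pow, ← mul_conj', map_sum, Finset.sum_mul_sum, hsummand]
  rw [intervalIntegral.integral_finsetSum fun k _ => by apply Continuous.intervalIntegrable; fun_prop]
  simp only [intervalIntegral.integral_finsetSum fun l _ => hintegrable _ l,
    intervalIntegral.integral_const_mul, integral_exp_mul_conj_exp, mul_ite, mul_zero]
  push_cast
  rw [Finset.mul_sum]
  refine Finset.sum_congr rfl fun k hk => ?_
  rw [Finset.sum_ite_eq, if_pos hk, mul_conj']
  ring

lemma card_Icc_neg_self (N : ℕ) : ((Finset.Icc (-(N:ℤ)) N).card : ℝ) = 2 * N + 1 := by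
  rw [Int.card_Icc, show (N:ℤ) + 1 - -N = ((2 * N + 1 : ℕ) : ℤ) by push_cast; ring,
    Int.toNat_natCast]
  push_cast
  ring

lemma IsTrigPoly.norm_sq_le {N : ℕ} {f : ℝ → ℂ} (hf : IsTrigPoly N f) (t : ℝ) :
    2 * π * ‖f t‖ ^ 2 ≤ (2 * N + 1) * ∫ s in (0:ℝ)..2 * π, ‖f s‖ ^ 2 := by
  obtain ⟨c, hc⟩ := hf
  have hsup : ‖f t‖ ≤ ∑ k ∈ Finset.Icc (-(N:ℤ)) N, ‖c k‖ := by
    rw [hc]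
    refine (norm_sum_le _ _).trans (Finset.sum_le_sum fun k _ => ?_)
    rw [norm_mul, norm_exp_int_mul_mul_I, mul_one]
  calc 2 * π * ‖f t‖ ^ 2 ≤ 2 * π * (∑ k ∈ Finset.Icc (-(N:ℤ)) N, ‖c k‖) ^ 2 := by gcongr
    _ ≤ 2 * π * ((2 * N + 1) * ∑ k ∈ Finset.Icc (-(N:ℤ)) N, ‖c k‖ ^ 2) := by
        rw [← card_Icc_neg_self]
        gcongr
        exact sq_sum_le_card_mul_sum_sq
    _ = (2 * N + 1) * ∫ s in (0:ℝ)..2 * π, ‖f s‖ ^ 2 := by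
        simp only [hc, integral_norm_sq_trigSum]
        ring

lemma IsTrigPoly.trigSup_rpow_le {N : ℕ} {f : ℝ → ℂ} (hf : IsTrigPoly N f) {p : ℝ} {m : ℕ}
    (hp : 0 < p) (hpm : p ≤ 2 * m) :
    trigSup f ^ p ≤ (2 * m * N + 1) / (2 * π) * ∫ t in (0:ℝ)..2 * π, ‖f t‖ ^ p := by
  have hfc := hf.continuous
  rcases (trigSup_nonneg hfc).eq_or_lt with hM | hM
  · rw [← hM, Real.zero_rpow hp.ne']
    exact mul_nonneg (by positivity) (integral_norm_rpow_nonneg f p)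
  obtain ⟨t₀, -, ht₀⟩ := exists_norm_eq_trigSup hfc
  set M := trigSup f
  have hrpow : ∀ x : ℝ, x ^ (2 * m : ℝ) = (x ^ m) ^ 2 := fun x => by
    rw [← pow_mul, ← Real.rpow_natCast]
    push_cast
    ring_nf
  have hpow : 2 * π * M ^ (2 * m : ℝ) ≤ (2 * m * N + 1) * ∫ t in (0:ℝ)..2 * π, ‖f t‖ ^ (2 * m : ℝ) := by
    have := (hf.pow m).norm_sq_le t₀
    simp only [Pi.pow_apply, norm_pow, ht₀] at this
    simp only [hrpow]
    push_cast at this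
    linarith
  have hsplit : M ^ (2 * m : ℝ) = M ^ (2 * m - p) * M ^ p := by
    rw [← Real.rpow_add hM, sub_add_cancel]
  rw [div_mul_eq_mul_div, le_div_iff₀ (by positivity)]
  refine le_of_mul_le_mul_left ?_ (Real.rpow_pos_of_pos hM (2 * m - p))
  calc M ^ (2 * m - p) * (M ^ p * (2 * π)) = 2 * π * M ^ (2 * m : ℝ) := by
        rw [hsplit]
        ring
    _ ≤ (2 * m * N + 1) * ∫ t in (0:ℝ)..2 * π, ‖f t‖ ^ (2 * m : ℝ) := hpow
    _ ≤ (2 * m * N + 1) * (M ^ (2 * m - p) * ∫ t in (0:ℝ)..2 * π, ‖f t‖ ^ p) := by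
        gcongr
        exact integral_rpow_le_trigSup_rpow_mul hfc hp.le hpm
    _ = M ^ (2 * m - p) * ((2 * m * N + 1) * ∫ t in (0:ℝ)..2 * π, ‖f t‖ ^ p) := by ring

end TrigPoly

theorem stmt9_general
    (n : ℕ) (c : ℤ → ℂ)
    (T : ℝ → ℂ) (hT : ∀ t, T t = ∑ k ∈ Finset.Icc (-(n:ℤ)) (n:ℤ), c k * Complex.exp (k * t * Complex.I))
    (p : ℝ) (hp : 0 < p)
    (mp : ℕ) (hmp1 : p / 2 ≤ (mp : ℝ)) :
    (∀ q : ℝ, p < q → trigLp T q ≤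
        ((2 * (mp : ℝ) * n + 1) / (2 * Real.pi)) ^ (1/p - 1/q) * trigLp T p) ∧
      trigSup T ≤ ((2 * (mp : ℝ) * n + 1) / (2 * Real.pi)) ^ (1/p) * trigLp T p := by
  have hTpoly : IsTrigPoly n T := ⟨c, hT⟩
  have hsup := hTpoly.trigSup_rpow_le (m := mp) hp (by linarith)
  have hC : 0 ≤ (2 * (mp : ℝ) * n + 1) / (2 * π) := by positivity
  exact ⟨fun q hpq => trigLp_le_of_trigSup_rpow_le hTpoly.continuous hp hpq hC hsup,
    trigSup_le_of_rpow_le hTpoly.continuous hp hC hsup⟩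

theorem stmt9
    (n : ℕ) (hn : 1 ≤ n) (c : ℤ → ℂ)
    (T : ℝ → ℂ) (hT : ∀ t, T t = ∑ k ∈ Finset.Icc (-(n:ℤ)) (n:ℤ), c k * Complex.exp (k * t * Complex.I))
    (p : ℝ) (hp : 0 < p)
    (mp : ℕ) (hmp0 : 1 ≤ mp) (hmp1 : p / 2 ≤ (mp : ℝ)) (hmp2 : (mp : ℝ) < 1 + p / 2) :
    (∀ q : ℝ, p < q → trigLp T q ≤
        ((2 * (mp : ℝ) * n + 1) / (2 * Real.pi)) ^ (1/p - 1/q) * trigLp T p) ∧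
      trigSup T ≤ ((2 * (mp : ℝ) * n + 1) / (2 * Real.pi)) ^ (1/p) * trigLp T p :=
  stmt9_general n c T hT p hp mp hmp1

end
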